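/- Every semicommutative ring is almost Armendariz. -/

import Mathlib

/-- An element `a` of a ring `R` is *strongly nilpotent* if every sequence
`a₀ = a`, `aₙ₊₁ ∈ aₙ R aₙ` is eventually zero. -/
def IsStronglyNilpotent {R : Type*} [Ring R] (a : R) : Prop :=
  ∀ s : ℕ → R, s 0 = a → (∀ n : ℕ, ∃ r : R, s (n + 1) = s n * r * s n) → ∃ n : ℕ, s n = 0

/-- The prime radical `P(R)` of a ring `R`: the intersection of all prime two-sided
ideals of `R`, equivalently the set of strongly nilpotent elements of `R`. -/
def primeRadical (R : Type*) [Ring R] : Set R :=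
  {a : R | IsStronglyNilpotent a}

/-- A ring `R` is *almost Armendariz* if whenever `f, g ∈ R[x]` satisfy `f g = 0`, every
product of a coefficient of `f` with a coefficient of `g` lies in the prime radical `P(R)`. -/
def IsAlmostArmendariz (R : Type*) [Ring R] : Prop :=
  ∀ f g : Polynomial R, f * g = 0 → ∀ i j : ℕ, f.coeff i * g.coeff j ∈ primeRadical R

/-!
In a semicommutative ring the nilpotent elements form a two-sided ideal `N`: if `c a ^ p = 0` and
`c b ^ q = 0`, semicommutativity lets one peel the factors of `(a + b) ^ (p + q)` off one at a
time, so `c (a + b) ^ (p + q) = 0`. The quotient `R / N` is reduced, and reduced rings are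
Armendariz. Hence each product `aᵢ bⱼ` of coefficients of `f` and `g` with `f g = 0` is nilpotent,
and nilpotent elements of a semicommutative ring are strongly nilpotent, because `y ^ (2 k) = 0`
forces `(y r y) ^ k = 0`.
-/

open Polynomial Finset

def IsSemicommutative (R : Type*) [Ring R] : Prop :=
  ∀ a b : R, a * b = 0 → ∀ r : R, a * r * b = 0

theorem TwoSidedIdeal.ringCon_mk'_eq_zero_iff {R : Type*} [Ring R] (I : TwoSidedIdeal R)
    {x : R} : I.ringCon.mk' x = 0 ↔ x ∈ I := by
  rw [← mem_ker, ker_ringCon_mk']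

namespace IsReduced

variable {Q : Type*} [Ring Q] [IsReduced Q]

theorem mul_eq_zero_comm {a b : Q} (h : a * b = 0) : b * a = 0 :=
  eq_zero_of_pow_eq_zero (n := 2) <| by rw [sq, mul_assoc, ← mul_assoc a, h, zero_mul, mul_zero]

theorem isSemicommutative : IsSemicommutative Q := fun a b h c =>
  eq_zero_of_pow_eq_zero (n := 2) <| by
    rw [sq, mul_assoc (a * c), ← mul_assoc b, ← mul_assoc b, mul_eq_zero_comm h]
    simp

theorem mul_eq_zero_of_mul_mul_self_eq_zero {a b : Q} (h : a * b * b = 0) : a * b = 0 :=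
  eq_zero_of_pow_eq_zero (n := 2) <| by rw [sq, mul_assoc, mul_eq_zero_comm h, mul_zero]

/- Multiply the `(i + j)`-th coefficient of `f g` on the right by `bⱼ`. A term `a_p b_q bⱼ` with
`q < j` vanishes by induction on `(i + j, j)`; one with `q > j` vanishes because `p + j < i + j`
gives `a_p bⱼ = 0`. What is left is `aᵢ bⱼ bⱼ = 0`. -/
theorem coeff_mul_coeff_eq_zero {f g : Q[X]} (hfg : f * g = 0) (i j : ℕ) :
    f.coeff i * g.coeff j = 0 := by
  have hsum : ∑ x ∈ antidiagonal (i + j), f.coeff x.1 * g.coeff x.2 * g.coeff j = 0 := by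
    rw [← sum_mul, ← coeff_mul, hfg, coeff_zero, zero_mul]
  rw [sum_eq_single (i, j)] at hsum
  · exact mul_eq_zero_of_mul_mul_self_eq_zero hsum
  · rintro ⟨p, q⟩ hpq hne
    rw [HasAntidiagonal.mem_antidiagonal] at hpq
    rcases lt_trichotomy q j with hq | rfl | hq
    · rw [coeff_mul_coeff_eq_zero hfg p q, zero_mul]
    · exact absurd (by rw [show p = i by omega]) hne
    · exact isSemicommutative _ _ (coeff_mul_coeff_eq_zero hfg p j) _
  · simp
termination_by (i + j, j)
decreasing_by all_goals rw [HasAntidiagonal.mem_antidiagonal] at hpq; rw [Prod.lex_def]; omega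

end IsReduced

namespace IsSemicommutative

variable {R : Type*} [Ring R]

theorem mul_mul_pow_eq_zero (hR : IsSemicommutative R) {a c : R} {n : ℕ} (h : c * a ^ n = 0)
    (r : R) : c * (r * a) ^ n = 0 := by
  induction n generalizing c with
  | zero => simpa using h
  | succ n ih =>
    rw [pow_succ', ← mul_assoc]
    apply ih
    simpa only [pow_succ', mul_assoc] using hR _ _ h r

theorem isNilpotent_mul_left (hR : IsSemicommutative R) {a : R} (ha : IsNilpotent a) (r : R) :
    IsNilpotent (r * a) := by
  obtain ⟨n, hn⟩ := ha
  exact ⟨n, by simpa using hR.mul_mul_pow_eq_zero (c := 1) (by simpa using hn) r⟩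

theorem isNilpotent_mul_right (hR : IsSemicommutative R) {a : R} (ha : IsNilpotent a) (r : R) :
    IsNilpotent (a * r) := by
  obtain ⟨n, hn⟩ := hR.isNilpotent_mul_left ha r
  exact ⟨n + 1, by rw [pow_succ, ← mul_assoc, mul_pow_mul, hn, mul_zero, zero_mul]⟩

theorem mul_add_pow_eq_zero (hR : IsSemicommutative R) {a b c : R} {p q : ℕ}
    (ha : c * a ^ p = 0) (hb : c * b ^ q = 0) : c * (a + b) ^ (p + q) = 0 := by
  induction p generalizing q c with
  | zero => simp_all
  | succ p ihp =>
    induction q generalizing c with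
    | zero => simp_all
    | succ q ihq =>
      have hca : c * a * (a + b) ^ (p + (q + 1)) = 0 :=
        ihp (by rwa [mul_assoc, ← pow_succ']) (hR _ _ hb a)
      have hcb : c * b * (a + b) ^ (p + 1 + q) = 0 :=
        ihq (hR _ _ ha b) (by rwa [mul_assoc, ← pow_succ'])
      rw [show p + 1 + (q + 1) = p + (q + 1) + 1 by omega, pow_succ', ← mul_assoc, mul_add,
        add_mul, hca, zero_add, show p + (q + 1) = p + 1 + q by omega, hcb]

theorem isNilpotent_add (hR : IsSemicommutative R) {a b : R} (ha : IsNilpotent a)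
    (hb : IsNilpotent b) : IsNilpotent (a + b) := by
  obtain ⟨p, hp⟩ := ha
  obtain ⟨q, hq⟩ := hb
  have := hR.mul_add_pow_eq_zero (c := 1) (by simpa using hp) (by simpa using hq)
  exact ⟨p + q, by simpa using this⟩

def nilIdeal (hR : IsSemicommutative R) : TwoSidedIdeal R :=
  .mk' {x | IsNilpotent x} .zero hR.isNilpotent_add .neg (hR.isNilpotent_mul_left · _)
    (hR.isNilpotent_mul_right · _)

theorem mem_nilIdeal (hR : IsSemicommutative R) {x : R} : x ∈ hR.nilIdeal ↔ IsNilpotent x :=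
  TwoSidedIdeal.mem_mk' ..

theorem isReduced_quotient_nilIdeal (hR : IsSemicommutative R) :
    IsReduced hR.nilIdeal.ringCon.Quotient := by
  refine ⟨fun x ⟨n, hn⟩ => ?_⟩
  obtain ⟨a, rfl⟩ := hR.nilIdeal.ringCon.mk'_surjective x
  rw [← map_pow, TwoSidedIdeal.ringCon_mk'_eq_zero_iff, mem_nilIdeal] at hn
  obtain ⟨k, hk⟩ := hn
  rw [TwoSidedIdeal.ringCon_mk'_eq_zero_iff, mem_nilIdeal]
  exact ⟨n * k, by rw [pow_mul, hk]⟩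

theorem mul_pow_mul_self_eq_zero (hR : IsSemicommutative R) {c y : R} {k : ℕ}
    (h : c * y ^ (2 * k) = 0) (r : R) : c * (y * r * y) ^ k = 0 := by
  induction k generalizing c with
  | zero => simpa using h
  | succ k ih =>
    rw [pow_succ', ← mul_assoc]
    apply ih
    have hcy : c * y * (y * y ^ (2 * k)) = 0 := by
      rwa [mul_assoc, ← pow_succ', ← pow_succ', show 2 * k + 1 + 1 = 2 * (k + 1) by ring]
    simpa only [mul_assoc] using hR _ _ hcy r

theorem isStronglyNilpotent_of_isNilpotent (hR : IsSemicommutative R) {x : R}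
    (hx : IsNilpotent x) : IsStronglyNilpotent x := by
  obtain ⟨m, hm⟩ := hx
  intro s hs0 hstep
  have hpow : ∀ n k, m ≤ 2 ^ n * k → s n ^ k = 0 := by
    intro n
    induction n with
    | zero => exact fun k hk => hs0 ▸ pow_eq_zero_of_le (by simpa using hk) hm
    | succ n ih =>
      intro k hk
      obtain ⟨r, hr⟩ := hstep n
      have hsq : 1 * s n ^ (2 * k) = 0 := by
        rw [one_mul]
        exact ih (2 * k) (by rwa [pow_succ, mul_assoc] at hk)
      simpa [hr] using hR.mul_pow_mul_self_eq_zero hsq r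
  exact ⟨m, by simpa using hpow m 1 (by simpa using Nat.lt_two_pow_self.le)⟩

end IsSemicommutative

/-- Every semicommutative ring (`a b = 0` implies `a R b = 0`) is almost Armendariz. -/
theorem almostArmendariz_of_semicommutative {R : Type*} [Ring R]
    (hsc : ∀ a b : R, a * b = 0 → ∀ r : R, a * r * b = 0) :
    IsAlmostArmendariz R := by
  have hR : IsSemicommutative R := hsc
  have := hR.isReduced_quotient_nilIdeal
  intro f g hfg i j
  let π := hR.nilIdeal.ringCon.mk'
  have hπ : π (f.coeff i * g.coeff j) = 0 := by
    rw [map_mul, ← coeff_map, ← coeff_map]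
    refine IsReduced.coeff_mul_coeff_eq_zero ?_ i j
    rw [← Polynomial.map_mul, hfg, Polynomial.map_zero]
  rw [TwoSidedIdeal.ringCon_mk'_eq_zero_iff, IsSemicommutative.mem_nilIdeal] at hπ
  exact hR.isStronglyNilpotent_of_isNilpotent hπ
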